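/- arXiv:math-ph/0402069 — 4 statements merged into one kernel-verified Lean document; each statement's English description precedes it below -/
import Mathlib

section
/- For every natural number p, the series c_p = (-1)^p ∑_{k=p}^{∞} 1/(k+1+p) · 1/2^{2k} · ((2k-1)!!)² / ((k-p)!(k+p)!) converges absolutely. -/
/-!
Writing `k = p + n`, the identity `2 ^ k (2k-1)!! = C(2k,k) k!` turns the `n`-th term into
`C(2k,k)² / 16 ^ k · (k!)² / (n! (k+p)!) · 1 / (k+1+p)`. The first factor is at most
`1 / (k+1)` (induction on the recursion for central binomial coefficients), the second is at
most `1` (log-convexity of the factorial), so the term is bounded by `1 / (n+1)²`.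
-/

open Nat

namespace Nat

theorem succ_mul_centralBinom_sq_le (k : ℕ) : (k + 1) * centralBinom k ^ 2 ≤ 16 ^ k := by
  induction k with
  | zero => simp
  | succ k ih =>
    refine Nat.le_of_mul_le_mul_right ?_ (by positivity : 0 < (k + 1) ^ 2)
    have hrec := succ_mul_centralBinom_succ k
    have hpoly : (k + 2) * (2 * (2 * k + 1)) ^ 2 ≤ 16 * (k + 1) ^ 3 := by nlinarith
    calc (k + 1 + 1) * centralBinom (k + 1) ^ 2 * (k + 1) ^ 2
        = (k + 2) * ((k + 1) * centralBinom (k + 1)) ^ 2 := by ring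
      _ = (k + 2) * (2 * (2 * k + 1)) ^ 2 * centralBinom k ^ 2 := by rw [hrec]; ring
      _ ≤ 16 * (k + 1) ^ 3 * centralBinom k ^ 2 := Nat.mul_le_mul_right _ hpoly
      _ = 16 * (k + 1) ^ 2 * ((k + 1) * centralBinom k ^ 2) := by ring
      _ ≤ 16 * (k + 1) ^ 2 * 16 ^ k := Nat.mul_le_mul_left _ ih
      _ = 16 ^ (k + 1) * (k + 1) ^ 2 := by ring

theorem centralBinom_mul_factorial (k : ℕ) : centralBinom k * k ! = 2 ^ k * (2 * k - 1)‼ := by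
  have hcb : centralBinom k * k ! * k ! = (2 * k)! := by
    simpa [centralBinom, two_mul] using choose_mul_factorial_mul_factorial (le_add_right k k)
  have hdf : (2 * k)! = 2 ^ k * k ! * (2 * k - 1)‼ := by
    rcases k with _ | k
    · rfl
    · rw [show 2 * (k + 1) = (2 * k + 1) + 1 by ring, factorial_eq_mul_doubleFactorial,
        show 2 * k + 1 + 1 = 2 * (k + 1) by ring, doubleFactorial_two_mul]
      rfl
  exact Nat.eq_of_mul_eq_mul_right (factorial_pos k) (by rw [hcb, hdf]; ring)

theorem factorial_mul_factorial_add_le {n m : ℕ} (p : ℕ) (h : n ≤ m) :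
    m ! * (n + p)! ≤ n ! * (m + p)! := by
  rw [← factorial_mul_ascFactorial n p, ← factorial_mul_ascFactorial m p, mul_left_comm]
  exact Nat.mul_le_mul_left _ (Nat.mul_le_mul_left _ (ascFactorial_le p (by omega)))

theorem succ_sq_mul_doubleFactorial_sq_le (p n : ℕ) :
    (n + 1) ^ 2 * (2 * (p + n) - 1)‼ ^ 2 ≤
      (p + n + 1 + p) * 4 ^ (p + n) * n ! * (p + n + p)! := by
  set k := p + n with hk
  have hfac : k ! * k ! ≤ n ! * (k + p)! := by
    simpa [k, add_comm p n] using factorial_mul_factorial_add_le p (le_add_left n p)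
  have hsq : (n + 1) ^ 2 ≤ (k + 1) * (k + 1 + p) := by
    rw [sq]; exact Nat.mul_le_mul (by omega) (by omega)
  refine Nat.le_of_mul_le_mul_right ?_ (by positivity : 0 < 4 ^ k)
  calc (n + 1) ^ 2 * (2 * k - 1)‼ ^ 2 * 4 ^ k
      = (n + 1) ^ 2 * (2 ^ k * (2 * k - 1)‼) ^ 2 := by
        rw [show 4 ^ k = (2 ^ k) ^ 2 by rw [← pow_mul, mul_comm, pow_mul]; norm_num]; ring
    _ = (n + 1) ^ 2 * centralBinom k ^ 2 * (k ! * k !) := by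
        rw [← centralBinom_mul_factorial]; ring
    _ ≤ (k + 1) * (k + 1 + p) * centralBinom k ^ 2 * (n ! * (k + p)!) := by gcongr
    _ = (k + 1 + p) * ((k + 1) * centralBinom k ^ 2) * (n ! * (k + p)!) := by ring
    _ ≤ (k + 1 + p) * 16 ^ k * (n ! * (k + p)!) := by gcongr; exact succ_mul_centralBinom_sq_le k
    _ = (k + 1 + p) * 4 ^ k * n ! * (k + p)! * 4 ^ k := by
        rw [show (16 : ℕ) ^ k = 4 ^ k * 4 ^ k by rw [← mul_pow]; norm_num]; ring

end Nat

theorem summable_one_div_succ_sq : Summable (fun n : ℕ => 1 / ((n : ℝ) + 1) ^ 2) := by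
  simpa [abs_of_nonneg, add_nonneg] using
    (Real.summable_one_div_nat_add_rpow 1 2).mpr one_lt_two

/-- The series `c_p = (-1)^p ∑_{k=p}^∞ 1/(k+1+p) · 1/2^{2k} · ((2k-1)!!)²/((k-p)!(k+p)!)`
converges absolutely (here the sum over `k ≥ p` is reindexed by `k = p + n`). -/
theorem cp_series_abs_convergent (p : ℕ) :
    Summable (fun n : ℕ =>
      |((-1 : ℝ))^p * ((1 : ℝ) / ((p + n : ℕ) + 1 + p) * (1 / (2 : ℝ)^(2*(p + n))) *
        ((Nat.doubleFactorial (2*(p + n) - 1) : ℝ))^2 /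
        ((Nat.factorial ((p + n) - p) : ℝ) * (Nat.factorial ((p + n) + p) : ℝ)))|) := by
  refine summable_one_div_succ_sq.of_nonneg_of_le (fun n => abs_nonneg _) (fun n => ?_)
  have hbound : ((n + 1) ^ 2 * (2 * (p + n) - 1)‼ ^ 2 : ℝ) ≤
      (p + n + 1 + p) * 4 ^ (p + n) * n ! * (p + n + p)! := by
    exact_mod_cast Nat.succ_sq_mul_doubleFactorial_sq_le p n
  rw [Nat.add_sub_cancel_left, abs_mul, abs_neg_one_pow, one_mul, abs_of_nonneg (by positivity),
    pow_mul, show (2 : ℝ) ^ 2 = 4 by norm_num, div_le_div_iff₀ (by positivity) (by positivity)]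
  push_cast
  field_simp
  linarith
end

section
/- For every natural number k ≥ 1 and natural p ≥ 0 with k ≥ p, one has 1/(k+1+p) · ((2k)!/(2^k k!)²)² < 1/(π k (k+1+p)) · exp(1/(12k)). -/
/-! Writing `n! = s n · √(2n) (n/e)^n` with the Stirling sequence `s`, the normalised central
binomial coefficient is `(2n)! / (2^n n!)^2 = s (2n) / (s n ^ 2 · √n)`. Since `s` decreases to `√π`
on the positive integers, this is at most `1 / √(π n)`; squaring gives the bound with `exp` replaced
by `1`, and `exp (1/(12k)) > 1` makes it strict. -/

open Real Nat Stirling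

lemma Stirling.stirlingSeq_le_of_le {m n : ℕ} (hm : m ≠ 0) (hmn : m ≤ n) :
    stirlingSeq n ≤ stirlingSeq m := by
  obtain ⟨m, rfl⟩ := Nat.exists_eq_succ_of_ne_zero hm
  obtain ⟨n, rfl⟩ := Nat.exists_eq_succ_of_ne_zero (by omega : n ≠ 0)
  exact stirlingSeq'_antitone (Nat.succ_le_succ_iff.mp hmn)

lemma Stirling.stirlingSeq_pos {n : ℕ} (hn : n ≠ 0) : 0 < stirlingSeq n :=
  (sqrt_pos.2 pi_pos).trans_le (sqrt_pi_le_stirlingSeq hn)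

lemma Stirling.factorial_eq_stirlingSeq_mul {n : ℕ} (hn : n ≠ 0) :
    (n ! : ℝ) = stirlingSeq n * (√(2 * n) * (n / exp 1) ^ n) := by
  rw [stirlingSeq, div_mul_cancel₀]
  positivity

lemma Nat.cast_centralBinom_eq_factorial_div (n : ℕ) :
    (n.centralBinom : ℝ) = (2 * n)! / n ! ^ 2 := by
  rw [eq_div_iff (by positivity), centralBinom_eq_two_mul_choose, sq, ← mul_assoc, two_mul]
  exact_mod_cast add_choose_mul_factorial_mul_factorial n n

lemma Nat.centralBinom_div_four_pow_eq_stirlingSeq {n : ℕ} (hn : n ≠ 0) :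
    (n.centralBinom : ℝ) / 4 ^ n = stirlingSeq (2 * n) / (stirlingSeq n ^ 2 * √n) := by
  have h2n : 2 * n ≠ 0 := by omega
  have hsqrt : √(2 * ((2 * n : ℕ) : ℝ)) = 2 * √n := by
    push_cast
    rw [show (2 : ℝ) * (2 * n) = 2 ^ 2 * n by ring, sqrt_mul (by positivity), sqrt_sq zero_le_two]
  have hs := (stirlingSeq_pos hn).ne'
  have hsq2n : √(2 * (n : ℝ)) ^ 2 = 2 * n := sq_sqrt (by positivity)
  have hsqn : √(n : ℝ) ^ 2 = n := sq_sqrt (by positivity)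
  have hpow : (2 * n / exp 1) ^ (2 * n) = (4 : ℝ) ^ n * ((n / exp 1) ^ n) ^ 2 := by
    rw [mul_div_assoc, mul_pow, pow_mul, ← pow_mul _ n 2, mul_comm n 2]
    norm_num
  rw [cast_centralBinom_eq_factorial_div, factorial_eq_stirlingSeq_mul hn,
    factorial_eq_stirlingSeq_mul h2n, hsqrt]
  push_cast
  field_simp
  rw [hsq2n, hsqn, hpow]
  ring

lemma Nat.centralBinom_div_four_pow_le {n : ℕ} (hn : n ≠ 0) :
    (n.centralBinom : ℝ) / 4 ^ n ≤ 1 / √(π * n) := by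
  have hs := stirlingSeq_pos hn
  rw [centralBinom_div_four_pow_eq_stirlingSeq hn, sqrt_mul pi_pos.le]
  calc stirlingSeq (2 * n) / (stirlingSeq n ^ 2 * √n)
      ≤ stirlingSeq n / (stirlingSeq n ^ 2 * √n) := by
        gcongr
        exact stirlingSeq_le_of_le hn (by omega)
    _ = 1 / (stirlingSeq n * √n) := by field_simp
    _ ≤ 1 / (√π * √n) := by
        gcongr
        exact sqrt_pi_le_stirlingSeq hn

theorem central_binomial_estimate_general (k p : ℕ) (hk : 1 ≤ k) :
    (1 : ℝ) / ((k : ℝ) + 1 + p) *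
      ((Nat.factorial (2*k) : ℝ) / ((2 : ℝ)^k * (Nat.factorial k : ℝ))^2)^2
    < 1 / (Real.pi * k * ((k : ℝ) + 1 + p)) * Real.exp (1 / (12*(k : ℝ))) := by
  have hk0 : k ≠ 0 := by omega
  have hratio : (Nat.factorial (2*k) : ℝ) / ((2 : ℝ)^k * (Nat.factorial k : ℝ))^2
      = k.centralBinom / 4 ^ k := by
    rw [cast_centralBinom_eq_factorial_div, mul_pow, ← pow_mul, mul_comm k 2, pow_mul]
    norm_num
    ring
  have hsq : ((k.centralBinom : ℝ) / 4 ^ k) ^ 2 ≤ 1 / (π * k) := by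
    calc ((k.centralBinom : ℝ) / 4 ^ k) ^ 2 ≤ (1 / √(π * k)) ^ 2 :=
          pow_le_pow_left₀ (by positivity) (centralBinom_div_four_pow_le hk0) 2
      _ = 1 / (π * k) := by rw [div_pow, one_pow, sq_sqrt (by positivity)]
  have hexp : 1 < exp (1 / (12 * (k : ℝ))) := one_lt_exp_iff.2 (by positivity)
  rw [hratio]
  calc 1 / ((k : ℝ) + 1 + p) * ((k.centralBinom : ℝ) / 4 ^ k) ^ 2
      ≤ 1 / ((k : ℝ) + 1 + p) * (1 / (π * k)) := by gcongr
    _ < 1 / ((k : ℝ) + 1 + p) * (1 / (π * k)) * exp (1 / (12 * (k : ℝ))) :=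
        lt_mul_of_one_lt_right (by positivity) hexp
    _ = 1 / (π * k * ((k : ℝ) + 1 + p)) * exp (1 / (12 * (k : ℝ))) := by
        field_simp

/-- For `k ≥ 1` and `p ≤ k`:
`1/(k+1+p) · ((2k)!/(2^k k!)²)² < 1/(π k (k+1+p)) · exp(1/(12k))`. -/
theorem central_binomial_estimate (k p : ℕ) (hk : 1 ≤ k) (hkp : p ≤ k) :
    (1 : ℝ) / ((k : ℝ) + 1 + p) *
      ((Nat.factorial (2*k) : ℝ) / ((2 : ℝ)^k * (Nat.factorial k : ℝ))^2)^2
    < 1 / (Real.pi * k * ((k : ℝ) + 1 + p)) * Real.exp (1 / (12*(k : ℝ))) :=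
  central_binomial_estimate_general k p hk
end

section
/- For every natural number k ≥ 1, the factorial satisfies the two-sided Stirling bound: n^n exp(-n) √(2πn) < n! < n^n √(2πn) exp(-n + 1/(12n)). -/
/-!
With `stirlingSeq n = n! / (√(2n) (n/e)^n)`, which tends to `√π`, the differences
`log (stirlingSeq (n + 1)) - log (stirlingSeq (n + 2))` are sums of series with positive terms,
so `stirlingSeq` is strictly decreasing on `n ≥ 1` and stays above `√π`. Bounding that series
termwise by the geometric series `∑ r ^ (j + 1) / 3`, `r = (2n + 3)⁻²` (Robbins), strictly since
its second term is `r ^ 2 / 5`, bounds the differences by `1/(12(n+1)) - 1/(12(n+2))`; hence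
`log (stirlingSeq n) - 1/(12n)` strictly increases to `log √π`, which is the upper bound.
-/

open Real Filter Topology Stirling

open scoped Nat

theorem StrictMono.lt_of_tendsto {α β : Type*} [TopologicalSpace α] [Preorder α]
    [OrderClosedTopology α] [PartialOrder β] [IsDirectedOrder β] [NoMaxOrder β] {f : β → α} {a : α}
    (hf : StrictMono f) (h : Tendsto f atTop (𝓝 a)) (b : β) : f b < a :=
  have ⟨c, hbc⟩ := exists_gt b
  (hf hbc).trans_le (hf.monotone.ge_of_tendsto h c)

theorem StrictAnti.lt_of_tendsto {α β : Type*} [TopologicalSpace α] [Preorder α]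
    [OrderClosedTopology α] [PartialOrder β] [IsDirectedOrder β] [NoMaxOrder β] {f : β → α} {a : α}
    (hf : StrictAnti f) (h : Tendsto f atTop (𝓝 a)) (b : β) : a < f b :=
  StrictMono.lt_of_tendsto (α := αᵒᵈ) hf h b

namespace Stirling

theorem log_stirlingSeq_sdiff_pos (n : ℕ) :
    0 < log (stirlingSeq (n + 1)) - log (stirlingSeq (n + 2)) :=
  hasSum_lt (f := 0) (i := 0) (fun _ => by positivity) (by positivity) hasSum_zero
    (log_stirlingSeq_sdiff_hasSum n)

theorem stirlingSeq'_strictAnti : StrictAnti (stirlingSeq ∘ Nat.succ) :=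
  strictAnti_nat_of_succ_lt fun n =>
    (log_lt_log_iff (stirlingSeq'_pos _) (stirlingSeq'_pos _)).mp
      (sub_pos.mp (log_stirlingSeq_sdiff_pos n))

theorem sqrt_pi_lt_stirlingSeq {n : ℕ} (hn : n ≠ 0) : √π < stirlingSeq n := by
  obtain ⟨n, rfl⟩ := Nat.exists_eq_succ_of_ne_zero hn
  exact stirlingSeq'_strictAnti.lt_of_tendsto
    (tendsto_stirlingSeq_sqrt_pi.comp (tendsto_add_atTop_nat 1)) n

theorem log_stirlingSeq_sdiff_lt (n : ℕ) :
    log (stirlingSeq (n + 1)) - log (stirlingSeq (n + 2)) <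
      1 / (12 * ((n : ℝ) + 1) * ((n : ℝ) + 2)) := by
  set r := ((1 : ℝ) / (2 * ((n + 1 : ℕ) : ℝ) + 1)) ^ 2 with hr
  have hr0 : 0 < r := by positivity
  have hr1 : r < 1 := by grw [hr, ← n.zero_le]; norm_num
  have hgeom : HasSum (fun j ↦ r ^ (j + 1) / 3) (1 / (12 * ((n : ℝ) + 1) * ((n : ℝ) + 2))) := by
    grind [((hasSum_geometric_of_lt_one hr0.le hr1).mul_right r).div_const 3]
  refine hasSum_lt (i := 1) (fun j ↦ ?_) ?_ (log_stirlingSeq_sdiff_hasSum n) hgeom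
  · simpa [hr, field] using show (3 : ℝ) ≤ 2 * (j + 1) + 1 by norm_cast; grind
  · change 1 / (2 * ((1 + 1 : ℕ) : ℝ) + 1) * r ^ (1 + 1) < r ^ (1 + 1) / 3
    have := pow_pos hr0 2
    norm_num
    linarith

theorem strictMono_log_stirlingSeq_sub :
    StrictMono fun n : ℕ ↦ log (stirlingSeq (n + 1)) - 1 / (12 * ((n : ℝ) + 1)) :=
  strictMono_nat_of_lt_succ fun n ↦ by
    have hstep := log_stirlingSeq_sdiff_lt n
    have htelescope : 1 / (12 * ((n : ℝ) + 1)) - 1 / (12 * ((n : ℝ) + 1 + 1)) =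
        1 / (12 * ((n : ℝ) + 1) * ((n : ℝ) + 2)) := by
      field_simp
      ring
    push_cast
    linarith

theorem tendsto_log_stirlingSeq_sub :
    Tendsto (fun n : ℕ ↦ log (stirlingSeq (n + 1)) - 1 / (12 * ((n : ℝ) + 1))) atTop
      (𝓝 (log √π)) := by
  have hlog : Tendsto (fun n : ℕ ↦ log (stirlingSeq (n + 1))) atTop (𝓝 (log √π)) :=
    (continuousAt_log (by positivity)).tendsto.comp
      (tendsto_stirlingSeq_sqrt_pi.comp (tendsto_add_atTop_nat 1))
  have hcorr : Tendsto (fun n : ℕ ↦ 1 / (12 * ((n : ℝ) + 1))) atTop (𝓝 0) := by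
    simpa using tendsto_one_div_add_atTop_nhds_zero_nat.mul_const (12⁻¹ : ℝ)
  simpa using hlog.sub hcorr

theorem stirlingSeq_lt_sqrt_pi_mul_exp {n : ℕ} (hn : n ≠ 0) :
    stirlingSeq n < √π * exp (1 / (12 * n)) := by
  obtain ⟨n, rfl⟩ := Nat.exists_eq_succ_of_ne_zero hn
  have hlt := strictMono_log_stirlingSeq_sub.lt_of_tendsto tendsto_log_stirlingSeq_sub n
  rw [← exp_log (stirlingSeq'_pos n), ← exp_log (by positivity : 0 < √π), ← exp_add]
  push_cast
  exact exp_lt_exp.mpr (by linarith)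

end Stirling

theorem pow_mul_exp_neg_mul_sqrt_two_pi_mul (n : ℕ) :
    (n : ℝ) ^ n * exp (-n) * √(2 * π * n) = √π * (√(2 * n) * (n / exp 1) ^ n) := by
  rw [div_pow, exp_one_pow, exp_neg, mul_assoc 2, sqrt_mul' 2 (by positivity),
    sqrt_mul pi_pos.le, sqrt_mul' 2 (by positivity), div_eq_mul_inv]
  ring

/-- Stirling's two-sided bound: for `n ≥ 1`,
`n^n e^{-n} √(2πn) < n! < n^n √(2πn) e^{-n + 1/(12n)}`. -/
theorem stirling_two_sided (n : ℕ) (hn : 1 ≤ n) :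
    (n : ℝ)^n * Real.exp (-(n : ℝ)) * Real.sqrt (2 * Real.pi * n) < (Nat.factorial n : ℝ) ∧
    (Nat.factorial n : ℝ) <
      (n : ℝ)^n * Real.sqrt (2 * Real.pi * n) * Real.exp (-(n : ℝ) + 1 / (12*(n : ℝ))) := by
  have hn0 : n ≠ 0 := Nat.one_le_iff_ne_zero.mp hn
  have hscale : 0 < √(2 * n) * (n / exp 1) ^ n := by positivity
  have hfactorial : (n ! : ℝ) = stirlingSeq n * (√(2 * n) * (n / exp 1) ^ n) :=
    (div_mul_cancel₀ _ hscale.ne').symm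
  have hstirling := pow_mul_exp_neg_mul_sqrt_two_pi_mul n
  refine ⟨?_, ?_⟩
  · rw [hstirling, hfactorial]
    exact mul_lt_mul_of_pos_right (sqrt_pi_lt_stirlingSeq hn0) hscale
  · calc (n ! : ℝ) < √π * exp (1 / (12 * n)) * (√(2 * n) * (n / exp 1) ^ n) := by
          rw [hfactorial]
          exact mul_lt_mul_of_pos_right (stirlingSeq_lt_sqrt_pi_mul_exp hn0) hscale
      _ = _ := by
        rw [exp_add]
        linear_combination (-exp (1 / (12 * n))) * hstirling
end

section
/- The coefficients c_p = ∑_{k=p}^{∞} 1/(k+1+p) · 1/4^k · ((2k-1)!!)² / ((k-p)!(k+p)!) satisfy the asymptotic bound: there exists a constant C > 0 such that |c_p| ≤ C/(p+1) for all natural numbers p. -/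
open Nat Finset

lemma centralBinom_sq_mul_le (k : ℕ) :
    (Nat.centralBinom k)^2 * (k+1) ≤ 16^k := by
  induction k with
  | zero => simp [Nat.centralBinom]
  | succ k ih =>
    have h := Nat.succ_mul_centralBinom_succ k
    have hpoly : 4*(2*k+1)^2*(k+2) ≤ 16*(k+1)^3 := by nlinarith
    have key : (Nat.centralBinom (k+1))^2 * (k+1+1) * (k+1)^3 ≤ 16^(k+1) * (k+1)^3 := by
      calc (Nat.centralBinom (k+1))^2 * (k+1+1) * (k+1)^3
          = ((k+1) * Nat.centralBinom (k+1))^2 * ((k+2)*(k+1)) := by ring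
        _ = (2*(2*k+1)*Nat.centralBinom k)^2 * ((k+2)*(k+1)) := by rw [h]
        _ = (Nat.centralBinom k^2 * (k+1)) * (4*(2*k+1)^2*(k+2)) := by ring
        _ ≤ 16^k * (4*(2*k+1)^2*(k+2)) := Nat.mul_le_mul_right _ ih
        _ ≤ 16^k * (16*(k+1)^3) := Nat.mul_le_mul_left _ hpoly
        _ = 16^(k+1) * (k+1)^3 := by rw [pow_succ]; ring
    exact Nat.le_of_mul_le_mul_right key (by positivity)

lemma fact_sq_le (p n : ℕ) : ((p+n)!)^2 ≤ n ! * (2*p+n)! := by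
  induction p with
  | zero => simp [pow_two]
  | succ p ih =>
    have e1 : (p+1+n)! = (p+n+1) * (p+n)! := by
      rw [show p+1+n = (p+n)+1 by ring, Nat.factorial_succ]
    have e2 : (2*(p+1)+n)! = (2*p+n+2) * ((2*p+n+1) * (2*p+n)!) := by
      rw [show 2*(p+1)+n = (2*p+n+1)+1 by ring, Nat.factorial_succ,
        show 2*p+n+1 = (2*p+n)+1 from rfl, Nat.factorial_succ]
    have hpoly : (p+n+1)^2 ≤ (2*p+n+2)*(2*p+n+1) := by nlinarith
    calc ((p+1+n)!)^2 = (p+n+1)^2 * ((p+n)!)^2 := by rw [e1]; ring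
      _ ≤ (p+n+1)^2 * (n ! * (2*p+n)!) := Nat.mul_le_mul_left _ ih
      _ ≤ ((2*p+n+2)*(2*p+n+1)) * (n ! * (2*p+n)!) := Nat.mul_le_mul_right _ hpoly
      _ = n ! * (2*(p+1)+n)! := by rw [e2]; ring

lemma doubleFact_mul (k : ℕ) : (2*k-1)‼ * (2^k * k !) = (2*k)! := by
  cases k with
  | zero => rfl
  | succ k =>
    have h1 : 2*(k+1)-1 = 2*k+1 := by omega
    have h2 : (2*(k+1))! = (2*(k+1))‼ * (2*k+1)‼ := by
      rw [show 2*(k+1) = (2*k+1)+1 by ring]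
      exact Nat.factorial_eq_mul_doubleFactorial _
    rw [h1, h2, Nat.doubleFactorial_two_mul]
    ring

lemma doubleFact_sq_le (k : ℕ) : ((2*k-1)‼)^2 * (k+1) ≤ 4^k * (k !)^2 := by
  have hpos : 0 < 4^k * (k !)^2 := by positivity
  have h4 : (4:ℕ)^k = 2^k * 2^k := by rw [← mul_pow]; norm_num
  have h16 : (16:ℕ)^k = 4^k * 4^k := by rw [← mul_pow]; norm_num
  have e : ((2*k-1)‼)^2 * (4^k * (k !)^2) = ((2*k)!)^2 := by
    rw [h4, ← doubleFact_mul k]; ring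
  have e2 : ((2*k)!)^2 = (Nat.centralBinom k)^2 * ((k !)^2)^2 := by
    rw [Nat.centralBinom,
      ← Nat.choose_mul_factorial_mul_factorial (Nat.le_mul_of_pos_left k two_pos),
      show 2*k-k = k by omega]
    ring
  have key : ((2*k-1)‼)^2 * (k+1) * (4^k * (k !)^2) ≤ (4^k * (k !)^2) * (4^k * (k !)^2) := by
    calc ((2*k-1)‼)^2 * (k+1) * (4^k * (k !)^2)
        = ((2*k)!)^2 * (k+1) := by rw [← e]; ring
      _ = (Nat.centralBinom k)^2 * (k+1) * ((k !)^2)^2 := by rw [e2]; ring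
      _ ≤ 16^k * ((k !)^2)^2 := Nat.mul_le_mul_right _ (centralBinom_sq_mul_le k)
      _ = (4^k * (k !)^2) * (4^k * (k !)^2) := by rw [h16]; ring
  exact Nat.le_of_mul_le_mul_right key hpos

/-- The coefficients `c_p = ∑_{k=p}^∞ 1/(k+1+p) · 1/4^k · ((2k-1)!!)²/((k-p)!(k+p)!)`
(reindexed by `k = p + n`) satisfy `|c_p| ≤ C/(p+1)` for some constant `C > 0`. -/
theorem cp_asymptotic_bound :
    ∃ C : ℝ, 0 < C ∧ ∀ p : ℕ,
      |∑' n : ℕ, (1 : ℝ) / (2*(p : ℝ) + n + 1) * (1 / (4 : ℝ)^(p + n)) *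
          ((Nat.doubleFactorial (2*(p + n) - 1) : ℝ))^2 /
          ((Nat.factorial n : ℝ) * (Nat.factorial (2*p + n) : ℝ))|
        ≤ C / ((p : ℝ) + 1) := by
  refine ⟨2, by norm_num, fun p => ?_⟩
  set f : ℕ → ℝ := fun n => (1 : ℝ) / (2*(p : ℝ) + n + 1) * (1 / (4 : ℝ)^(p + n)) *
          ((Nat.doubleFactorial (2*(p + n) - 1) : ℝ))^2 /
          ((Nat.factorial n : ℝ) * (Nat.factorial (2*p + n) : ℝ)) with hf
  have hnonneg : ∀ n, 0 ≤ f n := by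
    intro n
    have h1 : (0:ℝ) < 2*(p : ℝ) + n + 1 := by positivity
    have h2 : (0:ℝ) < (Nat.factorial n : ℝ) := by exact_mod_cast (Nat.factorial_pos n)
    have h3 : (0:ℝ) < (Nat.factorial (2*p+n) : ℝ) := by exact_mod_cast (Nat.factorial_pos (2*p+n))
    simp only [hf]
    positivity
  have hbound : ∀ n : ℕ, f n ≤ 2/((p:ℝ)+n+1) - 2/((p:ℝ)+n+2) := by
    intro n
    have hkey : ((Nat.doubleFactorial (2*(p + n) - 1) : ℝ))^2 * ((p:ℝ)+n+1)
        ≤ 4^(p+n) * ((Nat.factorial n : ℝ) * (Nat.factorial (2*p + n) : ℝ)) := by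
      have hN : ((2*(p+n)-1)‼)^2 * ((p+n)+1) ≤ 4^(p+n) * (n ! * (2*p+n)!) :=
        le_trans (doubleFact_sq_le (p+n))
          (Nat.mul_le_mul_left _ (fact_sq_le p n))
      exact_mod_cast hN
    have hA : (0:ℝ) < 2*(p : ℝ) + n + 1 := by positivity
    have hB : (0:ℝ) < (4:ℝ)^(p+n) := by positivity
    have h2 : (0:ℝ) < (Nat.factorial n : ℝ) := by exact_mod_cast (Nat.factorial_pos n)
    have h3 : (0:ℝ) < (Nat.factorial (2*p+n) : ℝ) := by exact_mod_cast (Nat.factorial_pos (2*p+n))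
    have hrhs : 2/((p:ℝ)+n+1) - 2/((p:ℝ)+n+2) = 2/(((p:ℝ)+n+1)*((p:ℝ)+n+2)) := by
      have e1 : (0:ℝ) < (p:ℝ)+n+1 := by positivity
      have e2 : (0:ℝ) < (p:ℝ)+n+2 := by positivity
      field_simp
      ring
    rw [hrhs]
    simp only [hf]
    have hfe : (1 : ℝ) / (2*(p : ℝ) + n + 1) * (1 / (4 : ℝ)^(p + n)) *
          ((Nat.doubleFactorial (2*(p + n) - 1) : ℝ))^2 /
          ((Nat.factorial n : ℝ) * (Nat.factorial (2*p + n) : ℝ))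
        = ((Nat.doubleFactorial (2*(p + n) - 1) : ℝ))^2 /
          ((2*(p : ℝ) + n + 1) * (4 : ℝ)^(p + n) *
            ((Nat.factorial n : ℝ) * (Nat.factorial (2*p + n) : ℝ))) := by
      field_simp
    rw [hfe, div_le_div_iff₀ (by positivity) (by positivity)]
    have hM : (0:ℝ) < (4:ℝ)^(p+n) * ((Nat.factorial n : ℝ) * (Nat.factorial (2*p+n) : ℝ)) :=
      mul_pos hB (mul_pos h2 h3)
    calc ((Nat.doubleFactorial (2*(p + n) - 1) : ℝ))^2 * (((p:ℝ)+n+1)*((p:ℝ)+n+2))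
        = (((Nat.doubleFactorial (2*(p + n) - 1) : ℝ))^2 * ((p:ℝ)+n+1)) * ((p:ℝ)+n+2) := by
          ring
      _ ≤ ((4:ℝ)^(p+n) * ((Nat.factorial n : ℝ) * (Nat.factorial (2*p+n) : ℝ))) * ((p:ℝ)+n+2) :=
          mul_le_mul_of_nonneg_right hkey (by positivity)
      _ ≤ ((4:ℝ)^(p+n) * ((Nat.factorial n : ℝ) * (Nat.factorial (2*p+n) : ℝ)))
            * (2*(2*(p:ℝ)+n+1)) := by
          apply mul_le_mul_of_nonneg_left _ hM.le
          have hp : (0:ℝ) ≤ (p:ℝ) := Nat.cast_nonneg p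
          have hn : (0:ℝ) ≤ (n:ℝ) := Nat.cast_nonneg n
          linarith
      _ = 2 * ((2*(p : ℝ) + n + 1) * (4 : ℝ)^(p + n) *
            ((Nat.factorial n : ℝ) * (Nat.factorial (2*p + n) : ℝ))) := by ring
  have hpar : ∀ N : ℕ, ∑ i ∈ Finset.range N, f i ≤ 2/((p:ℝ)+1) := by
    intro N
    have tele : ∑ i ∈ Finset.range N, (2/((p:ℝ)+i+1) - 2/((p:ℝ)+i+2))
        = 2/((p:ℝ)+1) - 2/((p:ℝ)+N+1) := by
      calc ∑ i ∈ Finset.range N, (2/((p:ℝ)+i+1) - 2/((p:ℝ)+i+2))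
          = ∑ i ∈ Finset.range N, ((fun i : ℕ => 2/((p:ℝ)+i+1)) i
              - (fun i : ℕ => 2/((p:ℝ)+i+1)) (i+1)) := by
            refine Finset.sum_congr rfl fun i _ => ?_
            push_cast
            ring
        _ = 2/((p:ℝ)+(0:ℕ)+1) - 2/((p:ℝ)+N+1) := Finset.sum_range_sub' _ N
        _ = 2/((p:ℝ)+1) - 2/((p:ℝ)+N+1) := by norm_num
    calc ∑ i ∈ Finset.range N, f i
        ≤ ∑ i ∈ Finset.range N, (2/((p:ℝ)+i+1) - 2/((p:ℝ)+i+2)) :=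
          Finset.sum_le_sum fun i _ => hbound i
      _ = 2/((p:ℝ)+1) - 2/((p:ℝ)+N+1) := tele
      _ ≤ 2/((p:ℝ)+1) := by
          have : (0:ℝ) ≤ 2/((p:ℝ)+N+1) := by positivity
          linarith
  have htsum : ∑' n, f n ≤ 2/((p:ℝ)+1) := Real.tsum_le_of_sum_range_le hnonneg hpar
  have htnonneg : 0 ≤ ∑' n, f n := tsum_nonneg hnonneg
  rw [abs_of_nonneg htnonneg]
  exact htsum
end
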